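/- arXiv:1912.13004 — 6 statements merged into one kernel-verified Lean document; each statement's English description precedes it below -/
import Mathlib

section
/- For every h > 0, the function T_h is differentiable at 0 with deriv T_h 0 = −2h · ∑_{i < r} (s i)⁻², and in particular deriv T_h 0 < 0. -/
/-- The PRO function `T_h(α) = f₁(α) + h·f₂(α)` for Tikhonov regularization. -/
noncomputable def proT (r : ℕ) (hr : 0 < r) (s : Fin r → ℝ) (h : ℝ) (α : ℝ) : ℝ :=
  α ^ 2 / (α + (s ⟨0, hr⟩) ^ 2) ^ 2 + h * ∑ i, (s i) ^ 4 / (α + (s i) ^ 2) ^ 2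

/-!
Near `α = 0` the term `α² / (α + s₁²)²` vanishes to second order, so only the sum contributes
to the derivative, and each summand `c² / (α + c)²` with `c = sᵢ²` has slope `-2 / c` at `0`.
-/

theorem hasDerivAt_sq_div_add_sq_zero {c : ℝ} (hc : c ≠ 0) :
    HasDerivAt (fun α : ℝ => α ^ 2 / (α + c) ^ 2) 0 0 := by
  have hden : ((0 : ℝ) + c) ^ 2 ≠ 0 := by simpa using hc
  refine ((hasDerivAt_pow 2 (0 : ℝ)).div
    (((hasDerivAt_id 0).add_const c).pow 2) hden).congr_deriv ?_
  simp

theorem hasDerivAt_sq_div_add_sq_const_zero {c : ℝ} (hc : c ≠ 0) :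
    HasDerivAt (fun α : ℝ => c ^ 2 / (α + c) ^ 2) (-2 * c⁻¹) 0 := by
  have hden : ((0 : ℝ) + c) ^ 2 ≠ 0 := by simpa using hc
  refine ((hasDerivAt_const (0 : ℝ) (c ^ 2)).div
    (((hasDerivAt_id 0).add_const c).pow 2) hden).congr_deriv ?_
  simp only [Pi.pow_apply, id, zero_add]
  field_simp
  ring

theorem hasDerivAt_proT_zero (r : ℕ) (hr : 0 < r) (s : Fin r → ℝ) (hs : ∀ i, s i ≠ 0)
    (h : ℝ) : HasDerivAt (proT r hr s h) (-2 * h * ∑ i, ((s i) ^ 2)⁻¹) 0 := by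
  have hf₁ := hasDerivAt_sq_div_add_sq_zero (pow_ne_zero 2 (hs ⟨0, hr⟩))
  have hf₂ : HasDerivAt (fun α : ℝ => ∑ i, (s i) ^ 4 / (α + (s i) ^ 2) ^ 2)
      (∑ i, -2 * ((s i) ^ 2)⁻¹) 0 := by
    refine HasDerivAt.fun_sum fun i _ => ?_
    simpa only [← pow_mul] using hasDerivAt_sq_div_add_sq_const_zero (pow_ne_zero 2 (hs i))
  refine (hf₁.add (hf₂.const_mul h)).congr_deriv ?_
  rw [← Finset.mul_sum]
  ring

theorem proT_deriv_at_zero_general (r : ℕ) (hr : 0 < r) (s : Fin r → ℝ)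
    (hpos : ∀ i, 0 < s i) :
    ∀ h : ℝ, 0 < h →
      HasDerivAt (proT r hr s h) (-2 * h * ∑ i, ((s i) ^ 2)⁻¹) 0 ∧
      deriv (proT r hr s h) 0 < 0 := by
  intro h hh
  have hderiv := hasDerivAt_proT_zero r hr s (fun i => (hpos i).ne') h
  have hsum : 0 < ∑ i, ((s i) ^ 2)⁻¹ :=
    Finset.sum_pos (fun i _ => by have := hpos i; positivity) ⟨⟨0, hr⟩, Finset.mem_univ _⟩
  refine ⟨hderiv, ?_⟩
  rw [hderiv.deriv]
  linarith [mul_pos (mul_pos two_pos hh) hsum]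

/-- For every `h > 0`, `T_h` is differentiable at `0` with
`deriv T_h 0 = −2h · ∑_{i<r} (s i)⁻²`, and in particular `deriv T_h 0 < 0`. -/
theorem proT_deriv_at_zero (r : ℕ) (hr : 0 < r) (s : Fin r → ℝ)
    (hpos : ∀ i, 0 < s i) (hmax : ∀ i, s i ≤ s ⟨0, hr⟩) :
    ∀ h : ℝ, 0 < h →
      HasDerivAt (proT r hr s h) (-2 * h * ∑ i, ((s i) ^ 2)⁻¹) 0 ∧
      deriv (proT r hr s h) 0 < 0 :=
  proT_deriv_at_zero_general r hr s hpos
end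

section
/- For every h > 0, the function T_h attains its minimum over the interval [0, (s 0)²/2] at a unique point α*, and this minimizer satisfies α* > 0. -/
open Set

theorem strictConvexOn_of_hasDerivAt2_pos {D : Set ℝ} (hD : Convex ℝ D) {f f' f'' : ℝ → ℝ}
    (hf : ContinuousOn f D) (hf' : ∀ x ∈ interior D, HasDerivAt f (f' x) x)
    (hf'' : ∀ x ∈ interior D, HasDerivAt f' (f'' x) x) (hf''₀ : ∀ x ∈ interior D, 0 < f'' x) :
    StrictConvexOn ℝ D f := by
  refine StrictMonoOn.strictConvexOn_of_deriv hD hf ?_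
  have hderiv : (interior D).EqOn (deriv f) f' := fun x hx ↦ (hf' x hx).deriv
  refine StrictMonoOn.congr ?_ hderiv.symm
  exact strictMonoOn_of_hasDerivWithinAt_pos hD.interior
    (fun x hx ↦ (hf'' x hx).continuousAt.continuousWithinAt)
    (fun x hx ↦ (hf'' x (interior_subset hx)).hasDerivWithinAt)
    (fun x hx ↦ hf''₀ x (interior_subset hx))

theorem IsLocalMinOn.hasDerivAt_nonneg_of_left_endpoint {f : ℝ → ℝ} {a b f' : ℝ} (hab : a < b)
    (hmin : IsLocalMinOn f (Icc a b) a) (hf : HasDerivAt f f' a) : 0 ≤ f' := by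
  have hcone : b - a ∈ posTangentConeAt (Icc a b) a :=
    sub_mem_posTangentConeAt_of_segment_subset (segment_eq_Icc hab.le).subset
  have := hmin.hasFDerivWithinAt_nonneg hf.hasFDerivAt.hasFDerivWithinAt hcone
  simp only [ContinuousLinearMap.toSpanSingleton_apply, smul_eq_mul] at this
  exact (mul_nonneg_iff_of_pos_left (sub_pos.2 hab)).1 this

theorem hasDerivAt_div_add_pow (A p x : ℝ) (n : ℕ) (hx : x + p ≠ 0) :
    HasDerivAt (fun y ↦ A / (y + p) ^ n) (-n * A / (x + p) ^ (n + 1)) x := by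
  have hpow : HasDerivAt (fun y : ℝ ↦ (y + p) ^ n) (n * (x + p) ^ (n - 1)) x := by
    simpa using ((hasDerivAt_id x).add_const p).fun_pow n
  refine ((hasDerivAt_const x A).fun_div hpow (pow_ne_zero n hx)).congr_deriv ?_
  rcases n with _ | n
  · simp
  · rw [Nat.add_sub_cancel]
    field_simp
    ring

theorem hasDerivAt_sq_div_add_sq (c x : ℝ) (hx : x + c ≠ 0) :
    HasDerivAt (fun y ↦ y ^ 2 / (y + c) ^ 2) (2 * c * x / (x + c) ^ 3) x := by
  have hden : HasDerivAt (fun y : ℝ ↦ (y + c) ^ 2) (2 * (x + c)) x := by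
    simpa using ((hasDerivAt_id x).add_const c).fun_pow 2
  refine ((hasDerivAt_pow 2 x).fun_div hden (pow_ne_zero 2 hx)).congr_deriv ?_
  field_simp
  ring

theorem hasDerivAt_mul_div_add_cube (c x : ℝ) (hx : x + c ≠ 0) :
    HasDerivAt (fun y ↦ 2 * c * y / (y + c) ^ 3) (2 * c * (c - 2 * x) / (x + c) ^ 4) x := by
  have hden : HasDerivAt (fun y : ℝ ↦ (y + c) ^ 3) (3 * (x + c) ^ 2) x := by
    simpa using ((hasDerivAt_id x).add_const c).fun_pow 3
  refine (((hasDerivAt_id' x).const_mul (2 * c)).fun_div hden (pow_ne_zero 3 hx)).congr_deriv ?_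
  field_simp
  ring

noncomputable def proTDeriv (r : ℕ) (hr : 0 < r) (s : Fin r → ℝ) (h : ℝ) (α : ℝ) : ℝ :=
  2 * s ⟨0, hr⟩ ^ 2 * α / (α + s ⟨0, hr⟩ ^ 2) ^ 3 + h * ∑ i, -2 * s i ^ 4 / (α + s i ^ 2) ^ 3

section

variable {r : ℕ} (hr : 0 < r) {s : Fin r → ℝ} (h : ℝ)

theorem hasDerivAt_proT {x : ℝ} (hx : ∀ i, x + s i ^ 2 ≠ 0) :
    HasDerivAt (proT r hr s h) (proTDeriv r hr s h x) x := by
  have hsum := HasDerivAt.fun_sum (u := Finset.univ)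
    fun i _ ↦ hasDerivAt_div_add_pow (s i ^ 4) (s i ^ 2) x 2 (hx i)
  refine ((hasDerivAt_sq_div_add_sq _ x (hx ⟨0, hr⟩)).fun_add (hsum.const_mul h)).congr_deriv ?_
  norm_num [proTDeriv]

theorem hasDerivAt_proTDeriv {x : ℝ} (hx : ∀ i, x + s i ^ 2 ≠ 0) :
    HasDerivAt (proTDeriv r hr s h)
      (2 * s ⟨0, hr⟩ ^ 2 * (s ⟨0, hr⟩ ^ 2 - 2 * x) / (x + s ⟨0, hr⟩ ^ 2) ^ 4 +
        h * ∑ i, 6 * s i ^ 4 / (x + s i ^ 2) ^ 4) x := by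
  have hsum := HasDerivAt.fun_sum (u := Finset.univ)
    fun i _ ↦ hasDerivAt_div_add_pow (-2 * s i ^ 4) (s i ^ 2) x 3 (hx i)
  refine ((hasDerivAt_mul_div_add_cube _ x (hx ⟨0, hr⟩)).fun_add (hsum.const_mul h)).congr_deriv ?_
  congr 2
  refine Finset.sum_congr rfl fun i _ ↦ ?_
  push_cast
  ring

theorem proTDeriv_zero_neg (hpos : ∀ i, 0 < s i) (hh : 0 < h) : proTDeriv r hr s h 0 < 0 := by
  have hval : proTDeriv r hr s h 0 = -2 * h * ∑ i, 1 / s i ^ 2 := by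
    simp only [proTDeriv, mul_zero, zero_div, zero_add, Finset.mul_sum]
    refine Finset.sum_congr rfl fun i _ ↦ ?_
    have := (hpos i).ne'
    field_simp
  have hsum : 0 < ∑ i, 1 / s i ^ 2 :=
    Finset.sum_pos (fun i _ ↦ by have := hpos i; positivity) ⟨⟨0, hr⟩, Finset.mem_univ _⟩
  rw [hval]
  nlinarith

theorem continuousOn_proT (hpos : ∀ i, 0 < s i) : ContinuousOn (proT r hr s h) (Ici 0) :=
  fun _ hx ↦ (hasDerivAt_proT hr h fun i ↦
    (add_pos_of_nonneg_of_pos hx (pow_pos (hpos i) 2)).ne').continuousAt.continuousWithinAt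

theorem strictConvexOn_proT (hpos : ∀ i, 0 < s i) (hh : 0 ≤ h) :
    StrictConvexOn ℝ (Icc 0 (s ⟨0, hr⟩ ^ 2 / 2)) (proT r hr s h) := by
  have hne : ∀ x ∈ Icc 0 (s ⟨0, hr⟩ ^ 2 / 2), ∀ i, x + s i ^ 2 ≠ 0 := fun x hx i ↦
    (add_pos_of_nonneg_of_pos hx.1 (pow_pos (hpos i) 2)).ne'
  refine strictConvexOn_of_hasDerivAt2_pos (convex_Icc _ _)
    ((continuousOn_proT hr h hpos).mono Icc_subset_Ici_self)
    (fun x hx ↦ hasDerivAt_proT hr h (hne x (interior_subset hx)))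
    (fun x hx ↦ hasDerivAt_proTDeriv hr h (hne x (interior_subset hx))) fun x hx ↦ ?_
  obtain ⟨hx0, hxm⟩ : x ∈ Ioo 0 (s ⟨0, hr⟩ ^ 2 / 2) := by rwa [interior_Icc] at hx
  have := hpos ⟨0, hr⟩
  have : 0 < s ⟨0, hr⟩ ^ 2 - 2 * x := by linarith
  have : 0 ≤ ∑ i, 6 * s i ^ 4 / (x + s i ^ 2) ^ 4 := Finset.sum_nonneg fun i _ ↦ by positivity
  positivity

end

theorem proT_exists_unique_minimizer_general (r : ℕ) (hr : 0 < r) (s : Fin r → ℝ)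
    (hpos : ∀ i, 0 < s i) (h : ℝ) (hh : 0 < h) :
    ∃ a ∈ Set.Icc (0 : ℝ) ((s ⟨0, hr⟩) ^ 2 / 2),
      IsMinOn (proT r hr s h) (Set.Icc 0 ((s ⟨0, hr⟩) ^ 2 / 2)) a ∧ 0 < a ∧
      ∀ b ∈ Set.Icc (0 : ℝ) ((s ⟨0, hr⟩) ^ 2 / 2),
        IsMinOn (proT r hr s h) (Set.Icc 0 ((s ⟨0, hr⟩) ^ 2 / 2)) b → b = a := by
  have hm : 0 < s ⟨0, hr⟩ ^ 2 / 2 := by have := hpos ⟨0, hr⟩; positivity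
  obtain ⟨a, ha, hamin⟩ := isCompact_Icc.exists_isMinOn (nonempty_Icc.2 hm.le)
    ((continuousOn_proT hr h hpos).mono Icc_subset_Ici_self)
  refine ⟨a, ha, hamin, ha.1.lt_of_ne fun ha0 ↦ ?_, fun b hb hbmin ↦
    (strictConvexOn_proT hr h hpos hh.le).eq_of_isMinOn hbmin hamin hb ha⟩
  subst ha0
  have hderiv := hasDerivAt_proT hr h (s := s) (x := 0) fun i ↦ by simp [(hpos i).ne']
  have := hamin.localize.hasDerivAt_nonneg_of_left_endpoint hm hderiv
  linarith [proTDeriv_zero_neg hr h hpos hh]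

/-- For every `h > 0`, `T_h` attains its minimum over `[0, (s 0)²/2]` at a
unique point `α*`, which moreover satisfies `α* > 0`. -/
theorem proT_exists_unique_minimizer (r : ℕ) (hr : 0 < r) (s : Fin r → ℝ)
    (hpos : ∀ i, 0 < s i) (hmax : ∀ i, s i ≤ s ⟨0, hr⟩) (h : ℝ) (hh : 0 < h) :
    ∃ a ∈ Set.Icc (0 : ℝ) ((s ⟨0, hr⟩) ^ 2 / 2),
      IsMinOn (proT r hr s h) (Set.Icc 0 ((s ⟨0, hr⟩) ^ 2 / 2)) a ∧ 0 < a ∧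
      ∀ b ∈ Set.Icc (0 : ℝ) ((s ⟨0, hr⟩) ^ 2 / 2),
        IsMinOn (proT r hr s h) (Set.Icc 0 ((s ⟨0, hr⟩) ^ 2 / 2)) b → b = a :=
  proT_exists_unique_minimizer_general r hr s hpos h hh
end

section
/- Let ζ = (s 0)² / ∑_{i < r} (s i)². If 0 < h ≤ ζ and α* ∈ (0, (s 0)²/2) is a minimizer of T_h over [0, (s 0)²/2], then α* ≥ (s 0)² · h. -/
lemma hasDerivAt_add_const_sq (c α : ℝ) :
    HasDerivAt (fun x : ℝ => (x + c) ^ 2) (2 * (α + c)) α := by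
  simpa using ((hasDerivAt_id α).add_const c).fun_pow 2

lemma hasDerivAt_sq_div_add_const_sq {c α : ℝ} (hc : α + c ≠ 0) :
    HasDerivAt (fun x : ℝ => x ^ 2 / (x + c) ^ 2) (2 * α * c / (α + c) ^ 3) α := by
  refine ((hasDerivAt_pow 2 α).fun_div (hasDerivAt_add_const_sq c α)
    (pow_ne_zero 2 hc)).congr_deriv ?_
  field_simp
  ring

lemma hasDerivAt_const_sq_div_add_const_sq {c α : ℝ} (hc : α + c ≠ 0) :
    HasDerivAt (fun x : ℝ => c ^ 2 / (x + c) ^ 2) (-(2 * c ^ 2 / (α + c) ^ 3)) α := by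
  refine ((hasDerivAt_const α (c ^ 2)).fun_div (hasDerivAt_add_const_sq c α)
    (pow_ne_zero 2 hc)).congr_deriv ?_
  field_simp
  ring

lemma hasDerivAt_proT_s10 {r : ℕ} (hr : 0 < r) {s : Fin r → ℝ} (hpos : ∀ i, 0 < s i) (h : ℝ)
    {α : ℝ} (hα : 0 ≤ α) :
    HasDerivAt (proT r hr s h)
      (2 * α * s ⟨0, hr⟩ ^ 2 / (α + s ⟨0, hr⟩ ^ 2) ^ 3 -
        h * ∑ i, 2 * s i ^ 4 / (α + s i ^ 2) ^ 3) α := by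
  have hden : ∀ i, α + s i ^ 2 ≠ 0 := fun i =>
    (add_pos_of_nonneg_of_pos hα (pow_pos (hpos i) 2)).ne'
  have hf₂ : HasDerivAt (fun x : ℝ => ∑ i, s i ^ 4 / (x + s i ^ 2) ^ 2)
      (∑ i, -(2 * s i ^ 4 / (α + s i ^ 2) ^ 3)) α := by
    refine HasDerivAt.fun_sum fun i _ => ?_
    simpa only [← pow_mul] using hasDerivAt_const_sq_div_add_const_sq (hden i)
  have := (hasDerivAt_sq_div_add_const_sq (hden ⟨0, hr⟩)).add (hf₂.const_mul h)
  rwa [Finset.sum_neg_distrib, mul_neg, ← sub_eq_add_neg] at this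

lemma sq_mul_le_of_proT_critical {r : ℕ} (hr : 0 < r) {s : Fin r → ℝ} (hpos : ∀ i, 0 < s i)
    {h α : ℝ} (hh : 0 ≤ h) (hα : 0 < α)
    (hcrit : 2 * α * s ⟨0, hr⟩ ^ 2 / (α + s ⟨0, hr⟩ ^ 2) ^ 3 =
      h * ∑ i, 2 * s i ^ 4 / (α + s i ^ 2) ^ 3) :
    s ⟨0, hr⟩ ^ 2 * h ≤ α := by
  set c := s ⟨0, hr⟩ ^ 2
  have hc : 0 < c := pow_pos (hpos _) 2
  have hk : 0 < 2 * c / (α + c) ^ 3 := by positivity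
  have hterm : 2 * c ^ 2 / (α + c) ^ 3 ≤ ∑ i, 2 * s i ^ 4 / (α + s i ^ 2) ^ 3 := by
    have := Finset.single_le_sum (f := fun i => 2 * s i ^ 4 / (α + s i ^ 2) ^ 3)
      (fun i _ => by positivity) (Finset.mem_univ ⟨0, hr⟩)
    simpa only [c, ← pow_mul] using this
  refine le_of_mul_le_mul_left ?_ hk
  calc 2 * c / (α + c) ^ 3 * (c * h) = h * (2 * c ^ 2 / (α + c) ^ 3) := by ring
    _ ≤ h * ∑ i, 2 * s i ^ 4 / (α + s i ^ 2) ^ 3 := mul_le_mul_of_nonneg_left hterm hh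
    _ = 2 * c / (α + c) ^ 3 * α := by rw [← hcrit]; ring

theorem proT_minimizer_lower_bound_general (r : ℕ) (hr : 0 < r) (s : Fin r → ℝ)
    (hpos : ∀ i, 0 < s i)
    (h : ℝ) (hh : 0 < h)
    (a : ℝ) (ha : a ∈ Set.Ioo (0 : ℝ) ((s ⟨0, hr⟩) ^ 2 / 2))
    (hamin : IsMinOn (proT r hr s h) (Set.Icc 0 ((s ⟨0, hr⟩) ^ 2 / 2)) a) :
    (s ⟨0, hr⟩) ^ 2 * h ≤ a := by
  obtain ⟨ha₀, ha₁⟩ := ha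
  have hloc : IsLocalMin (proT r hr s h) a := hamin.isLocalMin (Icc_mem_nhds ha₀ ha₁)
  have hcrit := hloc.hasDerivAt_eq_zero (hasDerivAt_proT_s10 hr hpos h ha₀.le)
  exact sq_mul_le_of_proT_critical hr hpos hh.le ha₀ (sub_eq_zero.mp hcrit)

/-- With `ζ = (s 0)² / ∑_{i<r} (s i)²`, if `0 < h ≤ ζ` and
`α* ∈ (0, (s 0)²/2)` is a minimizer of `T_h` over `[0, (s 0)²/2]`, then
`α* ≥ (s 0)² · h`. -/
theorem proT_minimizer_lower_bound (r : ℕ) (hr : 0 < r) (s : Fin r → ℝ)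
    (hpos : ∀ i, 0 < s i) (hmax : ∀ i, s i ≤ s ⟨0, hr⟩)
    (ζ : ℝ) (hζ : ζ = (s ⟨0, hr⟩) ^ 2 / ∑ i, (s i) ^ 2)
    (h : ℝ) (hh : 0 < h) (hhζ : h ≤ ζ)
    (a : ℝ) (ha : a ∈ Set.Ioo (0 : ℝ) ((s ⟨0, hr⟩) ^ 2 / 2))
    (hamin : IsMinOn (proT r hr s h) (Set.Icc 0 ((s ⟨0, hr⟩) ^ 2 / 2)) a) :
    (s ⟨0, hr⟩) ^ 2 * h ≤ a :=
  proT_minimizer_lower_bound_general r hr s hpos h hh a ha hamin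
end

section
/- Let a, b be real numbers with 0 < b ≤ a, and let α be a real number with 0 ≤ α ≤ a^(2/3) · b^(1/3). Then b / (b + α)³ ≥ a / (a + α)³. -/
/-- For `0 < b ≤ a` and `0 ≤ α ≤ a^{2/3} b^{1/3}`, one has
`b / (b + α)³ ≥ a / (a + α)³`. -/
theorem ratio_cube_ineq (a b α : ℝ) (hb : 0 < b) (hba : b ≤ a)
    (hα0 : 0 ≤ α) (hα : α ≤ a ^ ((2 : ℝ) / 3) * b ^ ((1 : ℝ) / 3)) :
    a / (a + α) ^ 3 ≤ b / (b + α) ^ 3 := by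
  have ha : 0 < a := lt_of_lt_of_le hb hba
  have hcube : (a ^ ((2 : ℝ) / 3) * b ^ ((1 : ℝ) / 3)) ^ 3 = a ^ 2 * b := by
    rw [mul_pow, ← Real.rpow_natCast (a ^ ((2:ℝ)/3)) 3,
      ← Real.rpow_natCast (b ^ ((1:ℝ)/3)) 3,
      ← Real.rpow_mul ha.le, ← Real.rpow_mul hb.le]
    norm_num
  have h3 : α ^ 3 ≤ a ^ 2 * b := by
    calc α ^ 3 ≤ (a ^ ((2 : ℝ) / 3) * b ^ ((1 : ℝ) / 3)) ^ 3 :=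
          pow_le_pow_left₀ hα0 hα 3
      _ = a ^ 2 * b := hcube
  have hba' : 0 < b + α := by linarith
  have haa' : 0 < a + α := by linarith
  rw [div_le_div_iff₀ (by positivity) (by positivity)]
  nlinarith [mul_nonneg (sub_nonneg.mpr hba) (sub_nonneg.mpr h3),
    mul_nonneg (mul_nonneg (mul_nonneg (sub_nonneg.mpr hba) ha.le) hb.le) hb.le,
    mul_nonneg (mul_nonneg (mul_nonneg (sub_nonneg.mpr hba) ha.le) hb.le) hα0]
end

section
/- Let c : Fin r → ℝ be arbitrary and set α₀ = (s 0)^(4/3) · (min_{i < r} s i)^(2/3). Then for every α with 0 < α ≤ α₀, one has ∑_{i < r} (2α (s i)² / ((s i)² + α)³) · (c i)² ≥ (2α (s 0)² / ((s 0)² + α)³) · ∑_{i < r} (c i)². -/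
/-- With `α₀ = (s 0)^{4/3} · (minᵢ s i)^{2/3}`, for every `0 < α ≤ α₀` and
any coefficients `c : Fin r → ℝ`,
`∑_{i<r} (2α (s i)² / ((s i)² + α)³) (c i)² ≥ (2α (s 0)² / ((s 0)² + α)³) ∑_{i<r} (c i)²`. -/
theorem bias_derivative_lower_bound (r : ℕ) (hr : 0 < r) (s : Fin r → ℝ)
    (hpos : ∀ i, 0 < s i) (hmax : ∀ i, s i ≤ s ⟨0, hr⟩)
    (c : Fin r → ℝ)
    (α₀ : ℝ)
    (hα₀ : α₀ = (s ⟨0, hr⟩) ^ ((4 : ℝ) / 3) *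
      (Finset.univ.inf' ⟨⟨0, hr⟩, Finset.mem_univ _⟩ s) ^ ((2 : ℝ) / 3)) :
    ∀ α : ℝ, 0 < α → α ≤ α₀ →
      (2 * α * (s ⟨0, hr⟩) ^ 2 / ((s ⟨0, hr⟩) ^ 2 + α) ^ 3) * ∑ i, (c i) ^ 2
        ≤ ∑ i, (2 * α * (s i) ^ 2 / ((s i) ^ 2 + α) ^ 3) * (c i) ^ 2 := by
  intro α hα hαle
  rw [Finset.mul_sum]
  apply Finset.sum_le_sum
  intro i _
  set s0 := s ⟨0, hr⟩ with hs0
  have hs0pos : 0 < s0 := hpos _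
  have hipos : 0 < s i := hpos i
  -- min ≤ s i
  have hmin : Finset.univ.inf' ⟨⟨0, hr⟩, Finset.mem_univ _⟩ s ≤ s i :=
    Finset.inf'_le _ (Finset.mem_univ i)
  have hminpos : 0 < Finset.univ.inf' ⟨⟨0, hr⟩, Finset.mem_univ _⟩ s := by
    obtain ⟨j, _, hj⟩ := Finset.exists_mem_eq_inf' (⟨⟨0, hr⟩, Finset.mem_univ _⟩ :
      (Finset.univ : Finset (Fin r)).Nonempty) s
    rw [hj]; exact hpos j
  have hαle' : α ≤ s0 ^ ((4 : ℝ) / 3) * (s i) ^ ((2 : ℝ) / 3) := by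
    refine hαle.trans ?_
    rw [hα₀]
    exact mul_le_mul_of_nonneg_left
      (Real.rpow_le_rpow hminpos.le hmin (by norm_num)) (Real.rpow_nonneg hs0pos.le _)
  -- cube it: α^3 ≤ s0^4 * (s i)^2
  have hkey : α ^ 3 ≤ s0 ^ 4 * (s i) ^ 2 := by
    have h1 : (0:ℝ) ≤ s0 ^ ((4 : ℝ) / 3) * (s i) ^ ((2 : ℝ) / 3) := by positivity
    have h2 := pow_le_pow_left₀ hα.le hαle' 3
    calc α ^ 3 ≤ (s0 ^ ((4 : ℝ) / 3) * (s i) ^ ((2 : ℝ) / 3)) ^ 3 := h2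
      _ = s0 ^ 4 * (s i) ^ 2 := by
          rw [mul_pow, ← Real.rpow_natCast (s0 ^ ((4:ℝ)/3)) 3,
            ← Real.rpow_natCast ((s i) ^ ((2:ℝ)/3)) 3,
            ← Real.rpow_mul hs0pos.le, ← Real.rpow_mul hipos.le,
            show (4:ℝ)/3*((3:ℕ):ℝ) = ((4:ℕ):ℝ) by push_cast; norm_num,
            show (2:ℝ)/3*((3:ℕ):ℝ) = ((2:ℕ):ℝ) by push_cast; norm_num,
            Real.rpow_natCast, Real.rpow_natCast]
  have hdi : (0:ℝ) < ((s i) ^ 2 + α) ^ 3 := by positivity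
  have hd0 : (0:ℝ) < (s0 ^ 2 + α) ^ 3 := by positivity
  have hsle : s i ≤ s0 := hmax i
  have hfrac : 2 * α * s0 ^ 2 / (s0 ^ 2 + α) ^ 3 ≤ 2 * α * (s i) ^ 2 / ((s i) ^ 2 + α) ^ 3 := by
    rw [div_le_div_iff₀ hd0 hdi]
    have hab : (0:ℝ) ≤ s0 ^ 2 - (s i) ^ 2 := by nlinarith
    have hfac : (0:ℝ) ≤ (s i) ^ 2 * s0 ^ 2 * ((s i) ^ 2 + s0 ^ 2)
        + 3 * α * ((s i) ^ 2 * s0 ^ 2) - α ^ 3 := by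
      nlinarith [hkey, mul_pos (pow_pos hipos 4) (pow_pos hs0pos 2),
        mul_pos hα (mul_pos (pow_pos hipos 2) (pow_pos hs0pos 2))]
    nlinarith [mul_nonneg hab hfac, hα.le]
  exact mul_le_mul_of_nonneg_right hfrac (sq_nonneg _)
end

section
/- With the notation of the I-PRO iteration below, and assuming ‖r_α‖² < ‖g‖² for every α > 0: for any starting value a₀ ∈ (0, μ*/2], the sequence (a_k)_{k ≥ 1} defined by a_{k+1} = the unique minimizer of T_{h(a_k)} over [0, μ*/2] is monotone, i.e., it is either monotonically nondecreasing or monotonically nonincreasing. -/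
/-!
The push-through identity `(AAᵀ + α)A = A(AᵀA + α)` gives `r_α = -α (AAᵀ + α)⁻¹ g`, so in an
eigenbasis of `AAᵀ` (eigenvalues `dᵢ ≥ 0`, coordinates `wᵢ` of `g`) one gets
`‖r_α‖² = ∑ (α / (dᵢ + α))² wᵢ²`. Hence `‖r_α‖²`, and with it `h(α)`, is positive and nondecreasing
for `α > 0`. Writing `T_c = q + c P` with `P(α) = ∑ μᵢ² / (μᵢ + α)²` strictly decreasing, comparing
`T_{c₁}` and `T_{c₂}` at each other's minimizers shows that the minimizer is nondecreasing in `c`;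
the drop of the `μ*`-term of `P` near `0` makes it positive. So `a_{k+1} = F(a_k)` with `F`
nondecreasing on `(0, ∞)` and mapping it into itself, and such an orbit is monotone in the direction
of its first step.
-/

open Matrix Finset Set

section ResidualFilter

variable {ι : Type*} [Fintype ι]

theorem div_add_self_le_div_add_self {d x y : ℝ} (hd : 0 ≤ d) (hx : 0 < x) (hxy : x ≤ y) :
    x / (d + x) ≤ y / (d + y) := by
  rw [div_le_div_iff₀ (by positivity) (by linarith)]
  nlinarith

theorem monotoneOn_sum_sq_div_add_mul_sq {d : ι → ℝ} (hd : ∀ i, 0 ≤ d i) (w : ι → ℝ) :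
    MonotoneOn (fun α => ∑ i, (α / (d i + α)) ^ 2 * w i ^ 2) (Ioi 0) := by
  intro x hx y _ hxy
  refine sum_le_sum fun i _ => mul_le_mul_of_nonneg_right ?_ (sq_nonneg _)
  have hx₀ : 0 ≤ x / (d i + x) := div_nonneg hx.le (add_nonneg (hd i) hx.le)
  exact pow_le_pow_left₀ hx₀ (div_add_self_le_div_add_self (hd i) hx hxy) 2

theorem sum_sq_div_add_mul_sq_pos {d w : ι → ℝ} (hd : ∀ i, 0 ≤ d i) (hw : 0 < ∑ i, w i ^ 2)
    {α : ℝ} (hα : 0 < α) : 0 < ∑ i, (α / (d i + α)) ^ 2 * w i ^ 2 := by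
  obtain ⟨j, -, hj⟩ := exists_ne_zero_of_sum_ne_zero hw.ne'
  refine sum_pos' (fun i _ => by positivity) ⟨j, mem_univ j, ?_⟩
  have : 0 < d j + α := add_pos_of_nonneg_of_pos (hd j) hα
  exact mul_pos (by positivity) (lt_of_le_of_ne (sq_nonneg _) hj.symm)

end ResidualFilter

namespace Matrix

variable {m n : Type*}

theorem PosSemidef.posDef_add_smul_one [DecidableEq n] {B : Matrix n n ℝ} (hB : B.PosSemidef)
    {α : ℝ} (hα : 0 < α) : (B + α • 1).PosDef :=
  PosDef.posSemidef_add hB <| by simpa [smul_one_eq_diagonal] using PosDef.diagonal fun _ : n => hα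

theorem sum_sq_mulVec_of_mem_unitaryGroup [Fintype n] [DecidableEq n] {U : Matrix n n ℝ}
    (hU : U ∈ unitaryGroup n ℝ) (v : n → ℝ) : ∑ i, (U *ᵥ v) i ^ 2 = ∑ i, v i ^ 2 := by
  have hUU : Uᵀ * U = 1 := by simpa [star_eq_conjTranspose] using mem_unitaryGroup_iff'.mp hU
  have hdot : ∀ x : n → ℝ, ∑ i, x i ^ 2 = x ⬝ᵥ x := fun x => by simp [dotProduct, sq]
  rw [hdot, hdot, dotProduct_mulVec, ← mulVec_transpose, mulVec_mulVec, hUU, one_mulVec]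

theorem IsHermitian.smul_inv_add_smul_one_mulVec [Fintype n] [DecidableEq n] {B : Matrix n n ℝ}
    (hB : B.IsHermitian) {α : ℝ} (hα : ∀ i, hB.eigenvalues i + α ≠ 0) (g : n → ℝ) :
    α • ((B + α • 1)⁻¹ *ᵥ g) = (hB.eigenvectorUnitary : Matrix n n ℝ) *ᵥ
      fun i => α / (hB.eigenvalues i + α) * (star (hB.eigenvectorUnitary : Matrix n n ℝ) *ᵥ g) i := by
  set U : Matrix n n ℝ := (hB.eigenvectorUnitary : Matrix n n ℝ)
  set d := hB.eigenvalues
  have hUU : star U * U = 1 := Unitary.coe_star_mul_self _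
  have hUU' : U * star U = 1 := Unitary.coe_mul_star_self _
  have hconj : ∀ x y : n → ℝ, U * diagonal x * star U * (U * diagonal y * star U) =
      U * diagonal (fun i => x i * y i) * star U := by
    intro x y
    simp only [Matrix.mul_assoc, ← Matrix.mul_assoc (star U) U, hUU, Matrix.one_mul,
      ← Matrix.mul_assoc (diagonal x), diagonal_mul_diagonal]
  have hspec : B = U * diagonal d * star U := by
    simpa [Unitary.conjStarAlgAut_apply] using hB.spectral_theorem
  have hshift : B + α • 1 = U * diagonal (fun i => d i + α) * star U := by
    rw [← diagonal_add, ← smul_one_eq_diagonal, Matrix.mul_add, Matrix.add_mul, ← hspec,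
      Matrix.mul_smul, Matrix.smul_mul, Matrix.mul_one, hUU']
  have hinv : (B + α • 1)⁻¹ = U * diagonal (fun i => (d i + α)⁻¹) * star U := by
    refine inv_eq_right_inv ?_
    simp only [hshift, hconj, mul_inv_cancel₀ (hα _), diagonal_one, Matrix.mul_one, hUU']
  rw [hinv, ← mulVec_smul, ← mulVec_mulVec, ← mulVec_mulVec, mulVec_smul]
  congr 1
  funext i
  simp only [Pi.smul_apply, mulVec_diagonal, smul_eq_mul]
  ring

noncomputable def tikhonovResidual [Fintype m] [Fintype n] [DecidableEq n] (A : Matrix m n ℝ)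
    (g : m → ℝ) (α : ℝ) : m → ℝ :=
  A *ᵥ ((Aᵀ * A + α • 1)⁻¹ *ᵥ (Aᵀ *ᵥ g)) - g

section Tikhonov

variable [Fintype m] [Fintype n] [DecidableEq m] [DecidableEq n]

theorem tikhonovResidual_eq (A : Matrix m n ℝ) (g : m → ℝ) {α : ℝ} (hα : 0 < α) :
    tikhonovResidual A g α = -(α • ((A * Aᵀ + α • 1)⁻¹ *ᵥ g)) := by
  set M := Aᵀ * A + α • 1
  set N := A * Aᵀ + α • 1
  have hM : IsUnit M.det := (isUnit_iff_isUnit_det M).mp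
    ((posSemidef_conjTranspose_mul_self A).posDef_add_smul_one hα).isUnit
  have hN : IsUnit N.det := (isUnit_iff_isUnit_det N).mp
    ((posSemidef_self_mul_conjTranspose A).posDef_add_smul_one hα).isUnit
  set f := M⁻¹ *ᵥ (Aᵀ *ᵥ g)
  -- the normal equations `M f = Aᵀ g` and `N A = A M` give `N (A f - g) = -α g`
  have hf : M *ᵥ f = Aᵀ *ᵥ g := by rw [mulVec_mulVec, mul_nonsing_inv M hM, one_mulVec]
  have hNA : N * A = A * M := by
    simp only [N, M, Matrix.add_mul, Matrix.mul_add, Matrix.mul_assoc, smul_mul, Matrix.mul_smul,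
      Matrix.one_mul, Matrix.mul_one]
  have hr : N *ᵥ (A *ᵥ f - g) = -(α • g) := by
    rw [mulVec_sub, mulVec_mulVec, hNA, ← mulVec_mulVec, hf, mulVec_mulVec]
    simp only [N, add_mulVec, smul_mulVec, one_mulVec]
    abel
  rw [tikhonovResidual, ← mulVec_smul, ← mulVec_neg, ← hr, mulVec_mulVec _ N⁻¹,
    nonsing_inv_mul N hN, one_mulVec]

theorem exists_sum_sq_tikhonovResidual_eq (A : Matrix m n ℝ) (g : m → ℝ) :
    ∃ d w : m → ℝ, (∀ i, 0 ≤ d i) ∧ ∑ i, w i ^ 2 = ∑ i, g i ^ 2 ∧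
      ∀ α, 0 < α → ∑ i, tikhonovResidual A g α i ^ 2 = ∑ i, (α / (d i + α)) ^ 2 * w i ^ 2 := by
  have hP : (A * Aᵀ).PosSemidef := posSemidef_self_mul_conjTranspose A
  refine ⟨hP.isHermitian.eigenvalues, star (hP.isHermitian.eigenvectorUnitary : Matrix m m ℝ) *ᵥ g,
    hP.eigenvalues_nonneg, sum_sq_mulVec_of_mem_unitaryGroup (Unitary.star_mem (Subtype.prop _)) g,
    fun α hα => ?_⟩
  have hα' : ∀ i, hP.isHermitian.eigenvalues i + α ≠ 0 :=
    fun i => (add_pos_of_nonneg_of_pos (hP.eigenvalues_nonneg i) hα).ne'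
  simp only [tikhonovResidual_eq A g hα, Pi.neg_apply, neg_sq,
    hP.isHermitian.smul_inv_add_smul_one_mulVec hα',
    sum_sq_mulVec_of_mem_unitaryGroup (Subtype.prop _), mul_pow]

theorem monotoneOn_sum_sq_tikhonovResidual (A : Matrix m n ℝ) (g : m → ℝ) :
    MonotoneOn (fun α => ∑ i, tikhonovResidual A g α i ^ 2) (Ioi 0) := by
  obtain ⟨d, w, hd, -, hdw⟩ := exists_sum_sq_tikhonovResidual_eq A g
  exact (monotoneOn_sum_sq_div_add_mul_sq hd w).congr fun α hα => (hdw α hα).symm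

theorem sum_sq_tikhonovResidual_pos (A : Matrix m n ℝ) {g : m → ℝ} (hg : 0 < ∑ i, g i ^ 2)
    {α : ℝ} (hα : 0 < α) : 0 < ∑ i, tikhonovResidual A g α i ^ 2 := by
  obtain ⟨d, w, hd, hwg, hdw⟩ := exists_sum_sq_tikhonovResidual_eq A g
  exact hdw α hα ▸ sum_sq_div_add_mul_sq_pos hd (hwg ▸ hg) hα

end Tikhonov

end Matrix

section FilterFactors

variable {ι : Type*} [Fintype ι]

noncomputable def filterSqSum (μ : ι → ℝ) (α : ℝ) : ℝ := ∑ i, μ i ^ 2 / (μ i + α) ^ 2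

theorem sq_div_add_sq_antitoneOn {μ : ℝ} (hμ : 0 ≤ μ) :
    AntitoneOn (fun α => μ ^ 2 / (μ + α) ^ 2) (Ici 0) := by
  intro x hx y _ hxy
  rcases hμ.eq_or_lt with rfl | hμ
  · simp
  · have hx : 0 < μ + x := add_pos_of_pos_of_nonneg hμ hx
    exact div_le_div_of_nonneg_left (sq_nonneg μ) (by positivity) (by gcongr)

theorem sq_div_add_sq_strictAntiOn {μ : ℝ} (hμ : 0 < μ) :
    StrictAntiOn (fun α => μ ^ 2 / (μ + α) ^ 2) (Ici 0) := by
  intro x hx _ _ hxy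
  have hx : 0 < μ + x := add_pos_of_pos_of_nonneg hμ hx
  exact div_lt_div_of_pos_left (by positivity) (by positivity) (by gcongr)

theorem strictAntiOn_filterSqSum {μ : ι → ℝ} (hμ : ∀ i, 0 ≤ μ i) {j : ι} (hj : 0 < μ j) :
    StrictAntiOn (filterSqSum μ) (Ici 0) := fun _ hx _ hy hxy =>
  sum_lt_sum (fun i _ => sq_div_add_sq_antitoneOn (hμ i) hx hy hxy.le)
    ⟨j, mem_univ j, sq_div_add_sq_strictAntiOn hj hx hy hxy⟩

theorem one_sub_sq_div_add_sq_le_filterSqSum_sub {μ : ι → ℝ} (hμ : ∀ i, 0 ≤ μ i) {j : ι}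
    (hj : 0 < μ j) {β : ℝ} (hβ : 0 ≤ β) :
    1 - μ j ^ 2 / (μ j + β) ^ 2 ≤ filterSqSum μ 0 - filterSqSum μ β := by
  have hdrop : ∀ i, 0 ≤ μ i ^ 2 / (μ i + 0) ^ 2 - μ i ^ 2 / (μ i + β) ^ 2 := fun i =>
    sub_nonneg.mpr (sq_div_add_sq_antitoneOn (hμ i) self_mem_Ici (mem_Ici.mpr hβ) hβ)
  calc 1 - μ j ^ 2 / (μ j + β) ^ 2 = μ j ^ 2 / (μ j + 0) ^ 2 - μ j ^ 2 / (μ j + β) ^ 2 := by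
        rw [add_zero, div_self (by positivity)]
    _ ≤ ∑ i, (μ i ^ 2 / (μ i + 0) ^ 2 - μ i ^ 2 / (μ i + β) ^ 2) :=
        single_le_sum (fun i _ => hdrop i) (mem_univ j)
    _ = filterSqSum μ 0 - filterSqSum μ β := sum_sub_distrib _ _

theorem ne_zero_of_isMinOn_sq_div_add_sq_add_mul_filterSqSum {μ : ι → ℝ} (hμ : ∀ i, 0 ≤ μ i)
    {μs : ℝ} {j : ι} (hj : μ j = μs) (hμs : 0 < μs) {c x : ℝ} (hc : 0 < c)
    (hx : IsMinOn (fun α => (α / (μs + α)) ^ 2 + c * filterSqSum μ α) (Icc 0 (μs / 2)) x) :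
    x ≠ 0 := by
  rintro rfl
  -- `β ≤ c μs` makes the drop `c (1 - μs² / (μs + β)²)` of the `j`-th term beat `(β / (μs + β))²`
  set β := min (μs / 2) (c * μs)
  have hβ : 0 < β := lt_min (by positivity) (by positivity)
  have hβc : β ≤ c * μs := min_le_right _ _
  have hle := isMinOn_iff.mp hx β ⟨hβ.le, min_le_left _ _⟩
  have hdrop := one_sub_sq_div_add_sq_le_filterSqSum_sub hμ (hj ▸ hμs) hβ.le
  rw [hj] at hdrop
  simp only [zero_div, ne_eq, OfNat.ofNat_ne_zero, not_false_eq_true, zero_pow, zero_add] at hle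
  have hD : 0 < (μs + β) ^ 2 := by positivity
  have key : c * (1 - μs ^ 2 / (μs + β) ^ 2) ≤ β ^ 2 / (μs + β) ^ 2 := by
    rw [div_pow] at hle
    linarith [mul_le_mul_of_nonneg_left hdrop hc.le]
  rw [one_sub_div hD.ne', ← mul_div_assoc, div_le_div_iff_of_pos_right hD] at key
  nlinarith [mul_le_mul_of_nonneg_right hβc hβ.le, mul_pos hc (mul_pos hβ hβ)]

end FilterFactors

theorem monotoneOn_of_isMinOn_add_mul_of_strictAntiOn {α : Type*} [LinearOrder α] {s : Set α}
    {f p : α → ℝ} (hp : StrictAntiOn p s) {C : Set ℝ} {x : ℝ → α}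
    (hx : ∀ c ∈ C, x c ∈ s ∧ IsMinOn (fun y => f y + c * p y) s (x c)) : MonotoneOn x C := by
  intro c₁ h₁ c₂ h₂ hc
  rcases hc.eq_or_lt with rfl | hc
  · rfl
  by_contra! hlt
  obtain ⟨hx₁, hmin₁⟩ := hx c₁ h₁
  obtain ⟨hx₂, hmin₂⟩ := hx c₂ h₂
  have hp' : p (x c₁) < p (x c₂) := hp hx₂ hx₁ hlt
  have e₁ := isMinOn_iff.mp hmin₁ _ hx₂
  have e₂ := isMinOn_iff.mp hmin₂ _ hx₁
  nlinarith

theorem monotone_or_antitone_of_monotoneOn_of_mapsTo {α : Type*} [LinearOrder α] {s : Set α}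
    {F : α → α} (hF : MonotoneOn F s) (hFs : MapsTo F s s) {a : ℕ → α} (ha₀ : a 0 ∈ s)
    (ha : ∀ k, a (k + 1) = F (a k)) : Monotone a ∨ Antitone a := by
  have hmem : ∀ k, a k ∈ s := fun k => by
    induction k with
    | zero => exact ha₀
    | succ k ih => exact ha k ▸ hFs ih
  rcases le_total (a 0) (a 1) with h | h
  · refine Or.inl (monotone_nat_of_le_succ fun k => ?_)
    induction k with
    | zero => exact h
    | succ k ih => exact (ha k).trans_le ((hF (hmem k) (hmem (k + 1)) ih).trans_eq (ha (k + 1)).symm)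
  · refine Or.inr (antitone_nat_of_succ_le fun k => ?_)
    induction k with
    | zero => exact h
    | succ k ih => exact (ha (k + 1)).trans_le ((hF (hmem (k + 1)) (hmem k) ih).trans_eq (ha k).symm)

theorem ipro_iteration_monotone_general (n m : ℕ)
    (A : Matrix (Fin n) (Fin m) ℝ) (g : Fin n → ℝ)
    (hH : (Aᵀ * A).IsHermitian)
    (μ : Fin m → ℝ) (hμ : μ = hH.eigenvalues)
    (μs : ℝ) (hμs_mem : ∃ i, μ i = μs) (hμs_pos : 0 < μs)
    (R : ℝ → ℝ)
    (hR : ∀ α : ℝ,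
      R α = ∑ i, ((A *ᵥ ((Aᵀ * A + α • 1)⁻¹ *ᵥ (Aᵀ *ᵥ g)) - g) i) ^ 2)
    (G : ℝ) (hG : G = ∑ i, (g i) ^ 2)
    (hres : ∀ α : ℝ, 0 < α → R α < G)
    (T : ℝ → ℝ → ℝ)
    (hT : ∀ c α' : ℝ, T c α' = (α' / (μs + α')) ^ 2 + c * ∑ i, (μ i) ^ 2 / (μ i + α') ^ 2)
    (mmin : ℝ → ℝ)
    (hm : ∀ c : ℝ, 0 < c →
      mmin c ∈ Set.Icc (0 : ℝ) (μs / 2) ∧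
      IsMinOn (T c) (Set.Icc 0 (μs / 2)) (mmin c) ∧
      ∀ b ∈ Set.Icc (0 : ℝ) (μs / 2), IsMinOn (T c) (Set.Icc 0 (μs / 2)) b → b = mmin c)
    (a : ℕ → ℝ) (ha0 : a 0 ∈ Set.Ioc (0 : ℝ) (μs / 2))
    (hrec : ∀ k : ℕ, a (k + 1) = mmin (R (a k) / (G - R (a k)))) :
    Monotone (fun k : ℕ => a (k + 1)) ∨ Antitone (fun k : ℕ => a (k + 1)) := by
  have hg : 0 < ∑ i, g i ^ 2 := hG ▸ lt_of_le_of_lt (by rw [hR]; positivity) (hres 1 one_pos)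
  have hRpos : ∀ α, 0 < α → 0 < R α := fun α hα => hR α ▸ sum_sq_tikhonovResidual_pos A hg hα
  have hRmono : MonotoneOn R (Ioi 0) :=
    (monotoneOn_sum_sq_tikhonovResidual A g).congr fun α _ => (hR α).symm
  have hc_pos : MapsTo (fun x => R x / (G - R x)) (Ioi 0) (Ioi 0) :=
    fun x hx => div_pos (hRpos x hx) (sub_pos.2 (hres x hx))
  have hc_mono : MonotoneOn (fun x => R x / (G - R x)) (Ioi 0) := fun x hx y hy hxy =>
    div_le_div₀ (hRpos y hy).le (hRmono hx hy hxy) (sub_pos.2 (hres y hy))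
      (sub_le_sub_left (hRmono hx hy hxy) G)
  obtain ⟨j, hj⟩ := hμs_mem
  have hμ0 : ∀ i, 0 ≤ μ i := by
    subst hμ; exact (posSemidef_conjTranspose_mul_self A).eigenvalues_nonneg
  have hmin : ∀ c ∈ Set.Ioi (0 : ℝ), mmin c ∈ Icc 0 (μs / 2) ∧
      IsMinOn (fun α => (α / (μs + α)) ^ 2 + c * filterSqSum μ α) (Icc 0 (μs / 2)) (mmin c) :=
    fun c hc => ⟨(hm c hc).1, funext (hT c) ▸ (hm c hc).2.1⟩
  have hmin_pos : MapsTo mmin (Ioi 0) (Ioi 0) := fun c hc => (hmin c hc).1.1.lt_of_ne <|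
    (ne_zero_of_isMinOn_sq_div_add_sq_add_mul_filterSqSum hμ0 hj hμs_pos hc (hmin c hc).2).symm
  have hmin_mono : MonotoneOn mmin (Ioi 0) := monotoneOn_of_isMinOn_add_mul_of_strictAntiOn
    ((strictAntiOn_filterSqSum hμ0 (hj ▸ hμs_pos)).mono Icc_subset_Ici_self) hmin
  exact (monotone_or_antitone_of_monotoneOn_of_mapsTo (hmin_mono.comp hc_mono hc_pos)
    (hmin_pos.comp hc_pos) ha0.1 hrec).imp
      (fun h _ _ hkl => h (Nat.succ_le_succ hkl)) (fun h _ _ hkl => h (Nat.succ_le_succ hkl))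

/-- monotonicity of the I-PRO iteration. Given a nonzero matrix `A`, data
`g` with `‖r_α‖² < ‖g‖²` for all `α > 0`, starting value `a₀ ∈ (0, μ*/2]`, and the
iteration `a_{k+1} = ` the unique minimizer of `T_{h(a_k)}` over `[0, μ*/2]`, the sequence
`(a_k)_{k ≥ 1}` is monotone (nondecreasing or nonincreasing). -/
theorem ipro_iteration_monotone (n m : ℕ)
    (A : Matrix (Fin n) (Fin m) ℝ) (hA : A ≠ 0) (g : Fin n → ℝ)
    (hH : (Aᵀ * A).IsHermitian)
    (μ : Fin m → ℝ) (hμ : μ = hH.eigenvalues)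
    (μs : ℝ) (hμs_mem : ∃ i, μ i = μs) (hμs_max : ∀ i, μ i ≤ μs) (hμs_pos : 0 < μs)
    (R : ℝ → ℝ)
    (hR : ∀ α : ℝ,
      R α = ∑ i, ((A *ᵥ ((Aᵀ * A + α • 1)⁻¹ *ᵥ (Aᵀ *ᵥ g)) - g) i) ^ 2)
    (G : ℝ) (hG : G = ∑ i, (g i) ^ 2)
    (hres : ∀ α : ℝ, 0 < α → R α < G)
    (T : ℝ → ℝ → ℝ)
    (hT : ∀ c α' : ℝ, T c α' = (α' / (μs + α')) ^ 2 + c * ∑ i, (μ i) ^ 2 / (μ i + α') ^ 2)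
    (mmin : ℝ → ℝ)
    (hm : ∀ c : ℝ, 0 < c →
      mmin c ∈ Set.Icc (0 : ℝ) (μs / 2) ∧
      IsMinOn (T c) (Set.Icc 0 (μs / 2)) (mmin c) ∧
      ∀ b ∈ Set.Icc (0 : ℝ) (μs / 2), IsMinOn (T c) (Set.Icc 0 (μs / 2)) b → b = mmin c)
    (a : ℕ → ℝ) (ha0 : a 0 ∈ Set.Ioc (0 : ℝ) (μs / 2))
    (hrec : ∀ k : ℕ, a (k + 1) = mmin (R (a k) / (G - R (a k)))) :
    Monotone (fun k : ℕ => a (k + 1)) ∨ Antitone (fun k : ℕ => a (k + 1)) :=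
  ipro_iteration_monotone_general n m A g hH μ hμ μs hμs_mem hμs_pos R hR G hG hres T hT mmin hm a
    ha0 hrec
end
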